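/- Let Λ be a compact invariant set for a continuous flow ψ_t on a manifold, with vector field X nowhere zero on Λ, and let 𝐍 ⊂ TΛ-bundle be a continuous dψ-quotient-invariant bundle with T_θ Σ = 𝐍(θ) ⊕ ⟨X(θ)⟩ and induced action Ψ_t = ℙ ∘ dψ_t (ℙ the projection onto 𝐍 along X). If Ψ_t|_Λ is hyperbolic with splitting 𝐍 = E^s ⊕ E^u, then the graph transform T_t on continuous linear functionals L : E^u → ℝ, defined by dψ_t(v + L(v)X) = Ψ_t(v) + (T_tL)(Ψ_t v)·X, satisfies T_t(L₁ − L₂) = [(L₁ − L₂) ∘ Ψ_t^{-1}|_{E^u}], hence ‖T_t(L₁) − T_t(L₂)‖ ≤ ‖Ψ_{-t}|_{E^u ∘ ψ_t}‖ · ‖L₁ − L₂‖ < ‖L₁ − L₂‖ for large t > 0; consequently T_t has a unique fixed point L* and 𝓔^u := graph(L*) is dψ_t-invariant with ‖dψ_{−t}|_{𝓔^u}‖ ≤ ‖Ψ_{−t}|_{E^u}‖·‖ℙ‖·(1 + ‖L*‖) → 0 exponentially. -/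

import Mathlib

open Filter Topology

/-- A continuous linear cocycle (`ℝ`-action by bundle isomorphisms on the
trivial vector bundle `B × E`) over a continuous flow on `B`. -/
structure LinearCocycle (B E : Type*) [TopologicalSpace B]
    [NormedAddCommGroup E] [NormedSpace ℝ E] where
  flow : ℝ → B → B
  flow_cont : Continuous fun p : ℝ × B => flow p.1 p.2
  flow_zero : ∀ b, flow 0 b = b
  flow_add : ∀ s t b, flow s (flow t b) = flow (s + t) b
  P : ℝ → B → E →L[ℝ] E
  P_cont : Continuous fun p : ℝ × B => P p.1 p.2
  P_zero : ∀ b, P 0 b = ContinuousLinearMap.id ℝ E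
  P_comp : ∀ s t b, (P s (flow t b)).comp (P t b) = P (s + t) b

variable {B E : Type*} [TopologicalSpace B]
  [NormedAddCommGroup E] [NormedSpace ℝ E]

/-- Quasi-hyperbolicity: every nonzero vector has unbounded orbit. -/
def LinearCocycle.IsQuasiHyperbolic (Φ : LinearCocycle B E) : Prop :=
  ∀ b : B, ∀ v : E, v ≠ 0 → ∀ C : ℝ, ∃ t : ℝ, C < ‖Φ.P t b v‖

/-- The subspace of vectors with bounded forward orbit. -/
def LinearCocycle.stable (Φ : LinearCocycle B E) (b : B) : Submodule ℝ E where
  carrier := {v | ∃ C : ℝ, ∀ t > (0:ℝ), ‖Φ.P t b v‖ ≤ C}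
  add_mem' := by
    rintro u v ⟨C₁, h₁⟩ ⟨C₂, h₂⟩
    exact ⟨C₁ + C₂, fun t ht => by
      simpa [map_add] using (norm_add_le (Φ.P t b u) (Φ.P t b v)).trans
        (add_le_add (h₁ t ht) (h₂ t ht))⟩
  zero_mem' := ⟨0, fun t ht => by simp⟩
  smul_mem' := by
    rintro c v ⟨C, h⟩
    exact ⟨‖c‖ * C, fun t ht => by
      rw [map_smul, norm_smul]
      exact mul_le_mul_of_nonneg_left (h t ht) (norm_nonneg c)⟩

/-- The subspace of vectors with bounded backward orbit. -/
def LinearCocycle.unstable (Φ : LinearCocycle B E) (b : B) : Submodule ℝ E where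
  carrier := {v | ∃ C : ℝ, ∀ t > (0:ℝ), ‖Φ.P (-t) b v‖ ≤ C}
  add_mem' := by
    rintro u v ⟨C₁, h₁⟩ ⟨C₂, h₂⟩
    exact ⟨C₁ + C₂, fun t ht => by
      simpa [map_add] using (norm_add_le (Φ.P (-t) b u) (Φ.P (-t) b v)).trans
        (add_le_add (h₁ t ht) (h₂ t ht))⟩
  zero_mem' := ⟨0, fun t ht => by simp⟩
  smul_mem' := by
    rintro c v ⟨C, h⟩
    exact ⟨‖c‖ * C, fun t ht => by
      rw [map_smul, norm_smul]
      exact mul_le_mul_of_nonneg_left (h t ht) (norm_nonneg c)⟩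

/-- Uniform hyperbolicity of a linear cocycle over an invariant subset `Λ`. -/
def LinearCocycle.IsHyperbolicOn (Φ : LinearCocycle B E) (Λ : Set B) : Prop :=
  ∃ Es Eu : B → Submodule ℝ E,
    (∀ t : ℝ, ∀ b ∈ Λ, (Es b).map (Φ.P t b : E →ₗ[ℝ] E) = Es (Φ.flow t b)) ∧
    (∀ t : ℝ, ∀ b ∈ Λ, (Eu b).map (Φ.P t b : E →ₗ[ℝ] E) = Eu (Φ.flow t b)) ∧
    (∀ b ∈ Λ, IsCompl (Es b) (Eu b)) ∧
    ∃ T > (0:ℝ), ∀ b ∈ Λ,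
      (∀ v ∈ Es b, v ≠ 0 → ‖Φ.P T b v‖ < (1/2) * ‖v‖) ∧
      (∀ v ∈ Eu b, v ≠ 0 → ‖Φ.P (-T) b v‖ < (1/2) * ‖v‖)

/-- The action induced on the transversal bundle: `Ψ_t = ℙ ∘ dψ_t`. -/
def LinearCocycle.transAction (Φ : LinearCocycle B E)
    (Pr : B → E →L[ℝ] E) (t : ℝ) (θ : B) : E →L[ℝ] E :=
  (Pr (Φ.flow t θ)).comp (Φ.P t θ)

/-- The graph-transform relation: `M = T_t L`, i.e.
`dψ_t (v + L(v) X) = Ψ_t v + (T_t L)(Ψ_t v) • X` on `E^u`. -/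
def LinearCocycle.GraphTransformEq (Φ : LinearCocycle B E)
    (Pr : B → E →L[ℝ] E) (X : B → E) (Eu : B → Submodule ℝ E)
    (t : ℝ) (L M : B → E →L[ℝ] ℝ) : Prop :=
  ∀ θ : B, ∀ v ∈ Eu θ,
    Φ.P t θ (v + L θ v • X θ) =
      Φ.transAction Pr t θ v +
        M (Φ.flow t θ) (Φ.transAction Pr t θ v) • X (Φ.flow t θ)

/-! Write `dψ_t v = Ψ_t v + c_t(v) X` along the splitting `E = N ⊕ ⟨X⟩`. The coefficient is an
additive cocycle over `Ψ`, `c_{s+t}(v) = c_t(v) + c_s(Ψ_t v)`, and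
`dψ_t (v + L v X) = Ψ_t v + (c_t v + L v) X`, so `M = T_t L` means `M ∘ Ψ_t = c_t + L` on `E^u`.
Hence differences of graph transforms are transported by `Ψ_t`, which `Ψ_{-t}` undoes with
exponential contraction on `E^u`. The fixed point is explicit: on `E^u` the increments of
`n ↦ c_{-n}` are `c_{-1} ∘ Ψ_{-n}`, so `c_{-n}` converges geometrically, and by the cocycle
identity `L* := -lim c_{-n}` (extended off `E^u` by Hahn–Banach) satisfies
`L* ∘ Ψ_t = c_t + L*`. On the graph of `L*`, `dψ_{-t}` is `Ψ_{-t}` followed by the bounded map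
`w ↦ w + L* w X`, which gives the exponential decay. -/

theorem exists_forall_ge_mul_exp_neg_lt_one (C : ℝ) {lam : ℝ} (hlam : 0 < lam) :
    ∃ t₀ > (0:ℝ), ∀ t ≥ t₀, C * Real.exp (-lam * t) < 1 := by
  have h : Tendsto (fun t => C * Real.exp (-lam * t)) atTop (𝓝 0) := by
    simpa using (Real.tendsto_exp_neg_atTop_nhds_zero.comp
      (tendsto_id.const_mul_atTop hlam)).const_mul C
  obtain ⟨a, ha⟩ := eventually_atTop.1 (h.eventually_lt_const zero_lt_one)
  exact ⟨max a 1, by positivity, fun t ht => ha t (le_of_max_le_left ht)⟩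

theorem exists_coord_of_sub_mem_span {x : E} (hx : x ≠ 0) (p : E →L[ℝ] E)
    (hp : ∀ ξ, ξ - p ξ ∈ Submodule.span ℝ {x}) :
    ∃ k : E →L[ℝ] ℝ, (∀ ξ, ξ = p ξ + k ξ • x) ∧
      ‖k‖ ≤ ‖x‖⁻¹ * ‖ContinuousLinearMap.id ℝ E - p‖ := by
  let k : E →L[ℝ] ℝ := (ContinuousLinearEquiv.coord ℝ x hx).comp
    ((ContinuousLinearMap.id ℝ E - p).codRestrict _ hp)
  have hk : ∀ ξ, k ξ • x = ξ - p ξ := fun ξ =>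
    congrArg Subtype.val (ContinuousLinearEquiv.toSpanNonzeroSingleton_coord ℝ hx ⟨_, hp ξ⟩)
  refine ⟨k, fun ξ => by rw [hk, add_sub_cancel], ?_⟩
  refine k.opNorm_le_bound (by positivity) fun ξ => ?_
  have hxpos : 0 < ‖x‖ := norm_pos_iff.2 hx
  rw [mul_assoc, ← div_eq_inv_mul, le_div_iff₀ hxpos, ← norm_smul, hk]
  exact (ContinuousLinearMap.id ℝ E - p).le_opNorm ξ

theorem exists_pos_bound_of_continuous [CompactSpace B] {F : Type*} [SeminormedAddCommGroup F]
    {f : B → F} (hf : Continuous f) : ∃ M > 0, ∀ θ, ‖f θ‖ ≤ M := by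
  obtain ⟨M, hM⟩ := isCompact_univ.exists_bound_of_continuousOn hf.continuousOn
  exact ⟨max M 1, by positivity, fun θ => (hM θ trivial).trans (le_max_left _ _)⟩

theorem sub_apply_mem_span_of_isCompl {N : Submodule ℝ E} {x : E}
    (hN : IsCompl N (Submodule.span ℝ {x})) {p : E →L[ℝ] E}
    (hp : ∀ v ∈ N, ∀ a : ℝ, p (v + a • x) = v) (ξ : E) :
    ξ - p ξ ∈ Submodule.span ℝ {x} := by
  obtain ⟨v, hv, y, hy, rfl⟩ := Submodule.mem_sup.1 (hN.sup_eq_top ▸ Submodule.mem_top (x := ξ))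
  obtain ⟨a, rfl⟩ := Submodule.mem_span_singleton.1 hy
  rw [hp v hv a, add_sub_cancel_left]
  exact Submodule.smul_mem _ a (Submodule.mem_span_singleton_self x)

theorem exists_coord_of_isCompl [CompactSpace B] {X : B → E} (hX : ∀ θ, X θ ≠ 0)
    (hXcont : Continuous X) {N : B → Submodule ℝ E}
    (hsplit : ∀ θ, IsCompl (N θ) (Submodule.span ℝ {X θ})) {Pr : B → E →L[ℝ] E}
    (hPrcont : Continuous Pr) (hPr : ∀ θ, ∀ v ∈ N θ, ∀ a : ℝ, Pr θ (v + a • X θ) = v) :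
    ∃ κ : B → E →L[ℝ] ℝ, (∀ θ ξ, ξ = Pr θ ξ + κ θ ξ • X θ) ∧ (∀ θ, κ θ (X θ) = 1) ∧
      ∃ K ≥ (0:ℝ), ∀ θ, ‖κ θ‖ ≤ K := by
  choose κ hκ hκb using fun θ =>
    exists_coord_of_sub_mem_span (hX θ) (Pr θ) (sub_apply_mem_span_of_isCompl (hsplit θ) (hPr θ))
  have hκX : ∀ θ, κ θ (X θ) = 1 := fun θ => by
    have h := hκ θ (X θ)
    rw [show Pr θ (X θ) = 0 by simpa using hPr θ 0 (N θ).zero_mem 1, zero_add] at h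
    exact smul_left_injective ℝ (hX θ) (h.symm.trans (one_smul ℝ _).symm)
  have hcont : Continuous fun θ => ‖X θ‖⁻¹ * ‖ContinuousLinearMap.id ℝ E - Pr θ‖ :=
    (hXcont.norm.inv₀ fun θ => norm_ne_zero_iff.2 (hX θ)).mul
      (continuous_const.sub hPrcont).norm
  obtain ⟨K, hK, hKb⟩ := exists_pos_bound_of_continuous hcont
  exact ⟨κ, hκ, hκX, K, hK.le, fun θ => (hκb θ).trans ((le_abs_self _).trans (hKb θ))⟩

namespace LinearCocycle

theorem P_apply_P (Φ : LinearCocycle B E) (s t : ℝ) (θ : B) (v : E) :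
    Φ.P s (Φ.flow t θ) (Φ.P t θ v) = Φ.P (s + t) θ v := by
  rw [← Φ.P_comp]; rfl

theorem flow_flow_neg (Φ : LinearCocycle B E) (t : ℝ) (θ : B) :
    Φ.flow t (Φ.flow (-t) θ) = θ := by
  rw [Φ.flow_add, add_neg_cancel, Φ.flow_zero]

variable {Φ : LinearCocycle B E} {Pr : B → E →L[ℝ] E} {X : B → E} {κ : B → E →L[ℝ] ℝ}
  {Eu : B → Submodule ℝ E}

variable (Φ) in
def flowCoord (κ : B → E →L[ℝ] ℝ) (t : ℝ) (θ : B) : E →L[ℝ] ℝ :=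
  (κ (Φ.flow t θ)).comp (Φ.P t θ)

theorem P_apply_eq_transAction_add (hκ : ∀ θ ξ, ξ = Pr θ ξ + κ θ ξ • X θ) (t : ℝ) (θ : B)
    (v : E) :
    Φ.P t θ v = Φ.transAction Pr t θ v + Φ.flowCoord κ t θ v • X (Φ.flow t θ) :=
  hκ _ _

theorem transAction_transAction (hXinv : ∀ t θ, Φ.P t θ (X θ) = X (Φ.flow t θ))
    (hκ : ∀ θ ξ, ξ = Pr θ ξ + κ θ ξ • X θ) (hPrX : ∀ θ, Pr θ (X θ) = 0)
    (s t : ℝ) (θ : B) (v : E) :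
    Φ.transAction Pr s (Φ.flow t θ) (Φ.transAction Pr t θ v) = Φ.transAction Pr (s + t) θ v := by
  conv_rhs =>
    rw [transAction, ContinuousLinearMap.comp_apply, ← Φ.P_apply_P, ← Φ.flow_add,
      P_apply_eq_transAction_add hκ t θ v, map_add, map_smul, hXinv, map_add, map_smul, hPrX,
      smul_zero, add_zero]
  rfl

theorem flowCoord_add (hXinv : ∀ t θ, Φ.P t θ (X θ) = X (Φ.flow t θ))
    (hκ : ∀ θ ξ, ξ = Pr θ ξ + κ θ ξ • X θ) (hκX : ∀ θ, κ θ (X θ) = 1)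
    (s t : ℝ) (θ : B) (v : E) :
    Φ.flowCoord κ (s + t) θ v =
      Φ.flowCoord κ t θ v + Φ.flowCoord κ s (Φ.flow t θ) (Φ.transAction Pr t θ v) := by
  conv_lhs =>
    rw [flowCoord, ContinuousLinearMap.comp_apply, ← Φ.P_apply_P, ← Φ.flow_add,
      P_apply_eq_transAction_add hκ t θ v, map_add, map_smul, hXinv, map_add, map_smul, hκX,
      smul_eq_mul, mul_one]
  rw [add_comm]
  rfl

theorem transAction_transAction_neg (hXinv : ∀ t θ, Φ.P t θ (X θ) = X (Φ.flow t θ))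
    (hκ : ∀ θ ξ, ξ = Pr θ ξ + κ θ ξ • X θ) (hPrX : ∀ θ, Pr θ (X θ) = 0)
    {t : ℝ} {θ : B} {w : E} (hw : Pr θ w = w) :
    Φ.transAction Pr t (Φ.flow (-t) θ) (Φ.transAction Pr (-t) θ w) = w := by
  rw [transAction_transAction hXinv hκ hPrX, add_neg_cancel]
  simp [transAction, Φ.flow_zero, Φ.P_zero, hw]

theorem graphTransformEq_iff (hX : ∀ θ, X θ ≠ 0) (hκ : ∀ θ ξ, ξ = Pr θ ξ + κ θ ξ • X θ)
    (hXinv : ∀ t θ, Φ.P t θ (X θ) = X (Φ.flow t θ)) {t : ℝ} {L M : B → E →L[ℝ] ℝ} :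
    Φ.GraphTransformEq Pr X Eu t L M ↔ ∀ θ, ∀ v ∈ Eu θ,
      M (Φ.flow t θ) (Φ.transAction Pr t θ v) = Φ.flowCoord κ t θ v + L θ v := by
  have hP : ∀ θ v, Φ.P t θ (v + L θ v • X θ) =
      Φ.transAction Pr t θ v + (Φ.flowCoord κ t θ v + L θ v) • X (Φ.flow t θ) := fun θ v => by
    rw [map_add, map_smul, hXinv, P_apply_eq_transAction_add hκ, add_smul, add_assoc]
  refine forall_congr' fun θ => forall₂_congr fun v _ => ?_
  rw [hP, add_right_inj, (smul_left_injective ℝ (hX _)).eq_iff, eq_comm]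

theorem GraphTransformEq.sub_apply_transAction (hX : ∀ θ, X θ ≠ 0)
    (hκ : ∀ θ ξ, ξ = Pr θ ξ + κ θ ξ • X θ)
    (hXinv : ∀ t θ, Φ.P t θ (X θ) = X (Φ.flow t θ)) {t : ℝ} {L₁ L₂ M₁ M₂ : B → E →L[ℝ] ℝ}
    (h₁ : Φ.GraphTransformEq Pr X Eu t L₁ M₁) (h₂ : Φ.GraphTransformEq Pr X Eu t L₂ M₂)
    {θ : B} {v : E} (hv : v ∈ Eu θ) :
    M₁ (Φ.flow t θ) (Φ.transAction Pr t θ v) - M₂ (Φ.flow t θ) (Φ.transAction Pr t θ v) =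
      L₁ θ v - L₂ θ v := by
  rw [(graphTransformEq_iff hX hκ hXinv).1 h₁ θ v hv,
    (graphTransformEq_iff hX hκ hXinv).1 h₂ θ v hv, add_sub_add_left_eq_sub]

theorem image_graph_eq_of_graphTransformEq {t : ℝ} {L : B → E →L[ℝ] ℝ}
    (hL : Φ.GraphTransformEq Pr X Eu t L L) {θ : B}
    (hEu : (Eu θ).map (Φ.transAction Pr t θ : E →ₗ[ℝ] E) = Eu (Φ.flow t θ)) :
    Φ.P t θ '' {ξ | ∃ v ∈ Eu θ, ξ = v + L θ v • X θ} =
      {ξ | ∃ w ∈ Eu (Φ.flow t θ), ξ = w + L (Φ.flow t θ) w • X (Φ.flow t θ)} := by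
  ext ξ
  constructor
  · rintro ⟨_, ⟨v, hv, rfl⟩, rfl⟩
    exact ⟨_, hEu ▸ Submodule.mem_map_of_mem hv, hL θ v hv⟩
  · rintro ⟨w, hw, rfl⟩
    obtain ⟨v, hv, rfl⟩ := Submodule.mem_map.1 (hEu ▸ hw)
    exact ⟨_, ⟨v, hv, rfl⟩, hL θ v hv⟩

theorem abs_sub_le_of_graphTransformEq (hX : ∀ θ, X θ ≠ 0)
    (hκ : ∀ θ ξ, ξ = Pr θ ξ + κ θ ξ • X θ) (hXinv : ∀ t θ, Φ.P t θ (X θ) = X (Φ.flow t θ))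
    (hPrX : ∀ θ, Pr θ (X θ) = 0) (hPrEu : ∀ θ, ∀ v ∈ Eu θ, Pr θ v = v)
    (hEuMem : ∀ t θ, ∀ v ∈ Eu θ, Φ.transAction Pr t θ v ∈ Eu (Φ.flow t θ))
    {t : ℝ} {L₁ L₂ M₁ M₂ : B → E →L[ℝ] ℝ}
    (h₁ : Φ.GraphTransformEq Pr X Eu t L₁ M₁) (h₂ : Φ.GraphTransformEq Pr X Eu t L₂ M₂)
    {θ : B} {w : E} (hw : w ∈ Eu θ) :
    |M₁ θ w - M₂ θ w| ≤
      ‖L₁ (Φ.flow (-t) θ) - L₂ (Φ.flow (-t) θ)‖ * ‖Φ.transAction Pr (-t) θ w‖ := by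
  have h := GraphTransformEq.sub_apply_transAction hX hκ hXinv h₁ h₂ (hEuMem (-t) θ w hw)
  rw [Φ.flow_flow_neg, transAction_transAction_neg hXinv hκ hPrX (hPrEu θ w hw)] at h
  rw [h, ← sub_apply, ← Real.norm_eq_abs]
  exact ContinuousLinearMap.le_opNorm _ _

theorem graphTransform_contracting (hX : ∀ θ, X θ ≠ 0)
    (hκ : ∀ θ ξ, ξ = Pr θ ξ + κ θ ξ • X θ) (hXinv : ∀ t θ, Φ.P t θ (X θ) = X (Φ.flow t θ))
    (hPrX : ∀ θ, Pr θ (X θ) = 0) (hPrEu : ∀ θ, ∀ v ∈ Eu θ, Pr θ v = v)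
    (hEuMem : ∀ t θ, ∀ v ∈ Eu θ, Φ.transAction Pr t θ v ∈ Eu (Φ.flow t θ))
    {C lam : ℝ} (hC : 0 < C) (hlam : 0 < lam)
    (hEuContr : ∀ θ, ∀ v ∈ Eu θ, ∀ t ≥ (0:ℝ),
      ‖Φ.transAction Pr (-t) θ v‖ ≤ C * Real.exp (-lam * t) * ‖v‖) :
    ∃ t₀ > (0:ℝ), ∀ t ≥ t₀, ∃ c ∈ Set.Ico (0:ℝ) 1,
      ∀ L₁ L₂ M₁ M₂ : B → E →L[ℝ] ℝ,
        Φ.GraphTransformEq Pr X Eu t L₁ M₁ →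
        Φ.GraphTransformEq Pr X Eu t L₂ M₂ →
        BddAbove (Set.range fun θ => ‖L₁ θ - L₂ θ‖) →
        ∀ θ' : B, ∀ w ∈ Eu θ', ‖w‖ ≤ 1 →
          |M₁ θ' w - M₂ θ' w| ≤ c * ⨆ θ, ‖L₁ θ - L₂ θ‖ := by
  obtain ⟨t₀, ht₀, hlt⟩ := exists_forall_ge_mul_exp_neg_lt_one C hlam
  refine ⟨t₀, ht₀, fun t ht => ⟨_, ⟨by positivity, hlt t ht⟩, ?_⟩⟩
  intro L₁ L₂ M₁ M₂ h₁ h₂ hbdd θ w hw hw1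
  have hdecay : ‖Φ.transAction Pr (-t) θ w‖ ≤ C * Real.exp (-lam * t) :=
    (hEuContr θ w hw t (ht₀.le.trans ht)).trans
      (mul_le_of_le_one_right (by positivity) hw1)
  calc |M₁ θ w - M₂ θ w|
      ≤ ‖L₁ (Φ.flow (-t) θ) - L₂ (Φ.flow (-t) θ)‖ * ‖Φ.transAction Pr (-t) θ w‖ :=
        abs_sub_le_of_graphTransformEq hX hκ hXinv hPrX hPrEu hEuMem h₁ h₂ hw
    _ ≤ (⨆ θ, ‖L₁ θ - L₂ θ‖) * (C * Real.exp (-lam * t)) :=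
        mul_le_mul (le_ciSup hbdd _) hdecay (norm_nonneg _)
          ((norm_nonneg _).trans (le_ciSup hbdd θ))
    _ = C * Real.exp (-lam * t) * ⨆ θ, ‖L₁ θ - L₂ θ‖ := mul_comm _ _

theorem exists_forall_norm_flowCoord_le [CompactSpace B] {K : ℝ} (hK : 0 ≤ K)
    (hκb : ∀ θ, ‖κ θ‖ ≤ K) (s : ℝ) : ∃ K' ≥ (0:ℝ), ∀ θ, ‖Φ.flowCoord κ s θ‖ ≤ K' := by
  obtain ⟨M, hM, hPb⟩ :=
    exists_pos_bound_of_continuous (Φ.P_cont.comp (Continuous.prodMk_right s))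
  exact ⟨K * M, by positivity, fun θ => (ContinuousLinearMap.opNorm_comp_le _ _).trans
    (mul_le_mul (hκb _) (hPb θ) (norm_nonneg _) hK)⟩

theorem abs_flowCoord_transAction_neg_le {s K' C lam : ℝ}
    (hK' : ∀ θ, ‖Φ.flowCoord κ s θ‖ ≤ K') (hK'0 : 0 ≤ K')
    (hEuContr : ∀ θ, ∀ v ∈ Eu θ, ∀ t ≥ (0:ℝ),
      ‖Φ.transAction Pr (-t) θ v‖ ≤ C * Real.exp (-lam * t) * ‖v‖)
    {θ : B} {v : E} (hv : v ∈ Eu θ) {t : ℝ} (ht : 0 ≤ t) :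
    |Φ.flowCoord κ s (Φ.flow (-t) θ) (Φ.transAction Pr (-t) θ v)| ≤
      K' * (C * Real.exp (-lam * t) * ‖v‖) :=
  Real.norm_eq_abs _ ▸ (ContinuousLinearMap.le_opNorm _ _).trans
    (mul_le_mul (hK' _) (hEuContr θ v hv t ht) (norm_nonneg _) hK'0)

theorem norm_flowCoord_neg_succ_sub_le (hXinv : ∀ t θ, Φ.P t θ (X θ) = X (Φ.flow t θ))
    (hκ : ∀ θ ξ, ξ = Pr θ ξ + κ θ ξ • X θ) (hκX : ∀ θ, κ θ (X θ) = 1) {K₁ C lam : ℝ}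
    (hK₁ : ∀ θ, ‖Φ.flowCoord κ (-1) θ‖ ≤ K₁) (hK₁0 : 0 ≤ K₁) (hC : 0 ≤ C)
    (hEuContr : ∀ θ, ∀ v ∈ Eu θ, ∀ t ≥ (0:ℝ),
      ‖Φ.transAction Pr (-t) θ v‖ ≤ C * Real.exp (-lam * t) * ‖v‖) (θ : B) (n : ℕ) :
    ‖(Φ.flowCoord κ (-(n + 1 : ℕ)) θ).comp (Eu θ).subtypeL -
        (Φ.flowCoord κ (-n) θ).comp (Eu θ).subtypeL‖ ≤
      K₁ * C * Real.exp (-lam) ^ n := by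
  refine ContinuousLinearMap.opNorm_le_bound _ (by positivity) fun v => ?_
  have h := flowCoord_add hXinv hκ hκX (-1) (-n) θ v
  rw [show (-1 : ℝ) + -n = -(n + 1 : ℕ) by push_cast; ring] at h
  rw [sub_apply, ContinuousLinearMap.comp_apply, ContinuousLinearMap.comp_apply,
    Submodule.subtypeL_apply, h, add_sub_cancel_left, Real.norm_eq_abs, ← Real.exp_nat_mul,
    mul_comm (n : ℝ)]
  exact (abs_flowCoord_transAction_neg_le hK₁ hK₁0 hEuContr v.2 n.cast_nonneg).trans_eq
    (by rw [Submodule.norm_coe]; ring)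

theorem exists_tendsto_flowCoord_neg_nat [CompactSpace B]
    (hXinv : ∀ t θ, Φ.P t θ (X θ) = X (Φ.flow t θ))
    (hκ : ∀ θ ξ, ξ = Pr θ ξ + κ θ ξ • X θ) (hκX : ∀ θ, κ θ (X θ) = 1)
    {K : ℝ} (hK : 0 ≤ K) (hκb : ∀ θ, ‖κ θ‖ ≤ K) {C lam : ℝ} (hC : 0 ≤ C) (hlam : 0 < lam)
    (hEuContr : ∀ θ, ∀ v ∈ Eu θ, ∀ t ≥ (0:ℝ),
      ‖Φ.transAction Pr (-t) θ v‖ ≤ C * Real.exp (-lam * t) * ‖v‖) :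
    ∃ D ≥ (0:ℝ), ∀ θ, ∃ ℓ : Eu θ →L[ℝ] ℝ,
      Tendsto (fun n : ℕ => (Φ.flowCoord κ (-n) θ).comp (Eu θ).subtypeL) atTop (𝓝 ℓ) ∧
        ‖ℓ‖ ≤ D := by
  obtain ⟨K₁, hK₁0, hK₁⟩ := exists_forall_norm_flowCoord_le (Φ := Φ) hK hκb (-1)
  have hr0 : 0 < Real.exp (-lam) := Real.exp_pos _
  have hr1 : Real.exp (-lam) < 1 := Real.exp_lt_one_iff.2 (neg_lt_zero.2 hlam)
  refine ⟨K + K₁ * C / (1 - Real.exp (-lam)), by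
    have := sub_pos.2 hr1; positivity, fun θ => ?_⟩
  set g : ℕ → Eu θ →L[ℝ] ℝ := fun n => (Φ.flowCoord κ (-n) θ).comp (Eu θ).subtypeL
  have hdist : ∀ n, dist (g n) (g (n + 1)) ≤ K₁ * C * Real.exp (-lam) ^ n := fun n => by
    rw [dist_comm (g n), dist_eq_norm (g (n + 1))]
    exact norm_flowCoord_neg_succ_sub_le hXinv hκ hκX hK₁ hK₁0 hC hEuContr θ n
  obtain ⟨ℓ, hℓ⟩ := cauchySeq_tendsto_of_complete (cauchySeq_of_le_geometric _ _ hr1 hdist)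
  have hg0 : ‖g 0‖ ≤ K := ContinuousLinearMap.opNorm_le_bound _ hK fun v => by
    simpa [g, flowCoord, Φ.flow_zero, Φ.P_zero] using (κ θ).le_opNorm v |>.trans
      (mul_le_mul_of_nonneg_right (hκb θ) (norm_nonneg _))
  refine ⟨ℓ, hℓ, ?_⟩
  calc ‖ℓ‖ ≤ ‖g 0‖ + dist (g 0) ℓ := by
        rw [dist_eq_norm' (g 0) ℓ]; exact norm_le_norm_add_norm_sub' ℓ (g 0)
    _ ≤ _ := add_le_add hg0 (dist_le_of_le_geometric_of_tendsto₀ _ _ hr1 hdist hℓ)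

theorem tendsto_flowCoord_transAction_neg_nat [CompactSpace B] {K : ℝ} (hK : 0 ≤ K)
    (hκb : ∀ θ, ‖κ θ‖ ≤ K) {C lam : ℝ} (hlam : 0 < lam)
    (hEuContr : ∀ θ, ∀ v ∈ Eu θ, ∀ t ≥ (0:ℝ),
      ‖Φ.transAction Pr (-t) θ v‖ ≤ C * Real.exp (-lam * t) * ‖v‖)
    (s : ℝ) {θ : B} {v : E} (hv : v ∈ Eu θ) :
    Tendsto (fun n : ℕ => Φ.flowCoord κ s (Φ.flow (-n) θ) (Φ.transAction Pr (-n) θ v))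
      atTop (𝓝 0) := by
  obtain ⟨K', hK'0, hK'⟩ := exists_forall_norm_flowCoord_le (Φ := Φ) hK hκb s
  have hexp : Tendsto (fun n : ℕ => K' * (C * Real.exp (-lam * n) * ‖v‖)) atTop (𝓝 0) := by
    simpa using ((Real.tendsto_exp_neg_atTop_nhds_zero.comp
      ((tendsto_natCast_atTop_atTop (R := ℝ)).const_mul_atTop hlam)).const_mul C
        |>.mul_const ‖v‖).const_mul K'
  exact squeeze_zero_norm (fun n => (Real.norm_eq_abs _).trans_le
    (abs_flowCoord_transAction_neg_le hK' hK'0 hEuContr hv n.cast_nonneg)) hexp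

theorem limit_flowCoord_neg_nat_eq [CompactSpace B]
    (hXinv : ∀ t θ, Φ.P t θ (X θ) = X (Φ.flow t θ))
    (hκ : ∀ θ ξ, ξ = Pr θ ξ + κ θ ξ • X θ) (hκX : ∀ θ, κ θ (X θ) = 1)
    {K : ℝ} (hK : 0 ≤ K) (hκb : ∀ θ, ‖κ θ‖ ≤ K) {C lam : ℝ} (hlam : 0 < lam)
    (hEuContr : ∀ θ, ∀ v ∈ Eu θ, ∀ t ≥ (0:ℝ),
      ‖Φ.transAction Pr (-t) θ v‖ ≤ C * Real.exp (-lam * t) * ‖v‖)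
    (hEuMem : ∀ t θ, ∀ v ∈ Eu θ, Φ.transAction Pr t θ v ∈ Eu (Φ.flow t θ))
    {ℓ : ∀ θ, Eu θ →L[ℝ] ℝ}
    (hℓ : ∀ θ, Tendsto (fun n : ℕ => (Φ.flowCoord κ (-n) θ).comp (Eu θ).subtypeL) atTop
      (𝓝 (ℓ θ)))
    (t : ℝ) {θ : B} {v : E} (hv : v ∈ Eu θ) :
    ℓ θ ⟨v, hv⟩ = Φ.flowCoord κ t θ v + ℓ (Φ.flow t θ) ⟨_, hEuMem t θ v hv⟩ := by
  set θ' := Φ.flow t θ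
  set w := Φ.transAction Pr t θ v
  have heval : ∀ θ (u : Eu θ),
      Tendsto (fun n : ℕ => Φ.flowCoord κ (-n) θ u) atTop (𝓝 (ℓ θ u)) := fun θ u =>
    ((ContinuousLinearMap.apply ℝ ℝ u).continuous.tendsto _).comp (hℓ θ)
  have hcocycle : ∀ n : ℕ, Φ.flowCoord κ (-n) θ v = Φ.flowCoord κ t θ v +
      (Φ.flowCoord κ (-n) θ' w +
        Φ.flowCoord κ (-t) (Φ.flow (-n) θ') (Φ.transAction Pr (-n) θ' w)) := fun n => by
    rw [← flowCoord_add hXinv hκ hκX, ← flowCoord_add hXinv hκ hκX,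
      show -t + -(n : ℝ) + t = -n by ring]
  refine tendsto_nhds_unique (heval θ ⟨v, hv⟩) ?_
  simpa [hcocycle] using tendsto_const_nhds.add ((heval θ' ⟨w, hEuMem t θ v hv⟩).add
    (tendsto_flowCoord_transAction_neg_nat hK hκb hlam hEuContr (-t) (hEuMem t θ v hv)))

theorem exists_graphTransformEq_self [CompactSpace B] (hX : ∀ θ, X θ ≠ 0)
    (hXinv : ∀ t θ, Φ.P t θ (X θ) = X (Φ.flow t θ))
    (hκ : ∀ θ ξ, ξ = Pr θ ξ + κ θ ξ • X θ) (hκX : ∀ θ, κ θ (X θ) = 1)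
    {K : ℝ} (hK : 0 ≤ K) (hκb : ∀ θ, ‖κ θ‖ ≤ K) {C lam : ℝ} (hC : 0 ≤ C) (hlam : 0 < lam)
    (hEuContr : ∀ θ, ∀ v ∈ Eu θ, ∀ t ≥ (0:ℝ),
      ‖Φ.transAction Pr (-t) θ v‖ ≤ C * Real.exp (-lam * t) * ‖v‖)
    (hEuMem : ∀ t θ, ∀ v ∈ Eu θ, Φ.transAction Pr t θ v ∈ Eu (Φ.flow t θ)) :
    ∃ L : B → E →L[ℝ] ℝ, ∃ D ≥ (0:ℝ), (∀ t, Φ.GraphTransformEq Pr X Eu t L L) ∧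
      ∀ θ, ∀ v ∈ Eu θ, |L θ v| ≤ D * ‖v‖ := by
  obtain ⟨D, hD0, hD⟩ := exists_tendsto_flowCoord_neg_nat hXinv hκ hκX hK hκb hC hlam hEuContr
  choose ℓ hℓ hℓD using hD
  choose L hL _ using fun θ => exists_extension_norm_eq (Eu θ) (-ℓ θ)
  refine ⟨L, D, hD0, fun t => (graphTransformEq_iff hX hκ hXinv).2 fun θ v hv => ?_,
    fun θ v hv => ?_⟩
  · rw [hL _ ⟨_, hEuMem t θ v hv⟩, hL θ ⟨v, hv⟩, neg_apply, neg_apply,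
      limit_flowCoord_neg_nat_eq hXinv hκ hκX hK hκb hlam hEuContr hEuMem hℓ t hv]
    ring
  · rw [hL θ ⟨v, hv⟩, ← Real.norm_eq_abs]
    exact ((-ℓ θ).le_opNorm _).trans
      (mul_le_mul_of_nonneg_right ((norm_neg (ℓ θ)).trans_le (hℓD θ)) (norm_nonneg _))

theorem norm_P_apply_graph_le {t D Mx : ℝ} {L : B → E →L[ℝ] ℝ}
    (hL : Φ.GraphTransformEq Pr X Eu t L L) (hLb : ∀ θ, ∀ w ∈ Eu θ, |L θ w| ≤ D * ‖w‖)
    (hXb : ∀ θ, ‖X θ‖ ≤ Mx)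
    (hEuMem : ∀ t θ, ∀ v ∈ Eu θ, Φ.transAction Pr t θ v ∈ Eu (Φ.flow t θ))
    {θ : B} {v : E} (hv : v ∈ Eu θ) :
    ‖Φ.P t θ (v + L θ v • X θ)‖ ≤ (1 + D * Mx) * ‖Φ.transAction Pr t θ v‖ := by
  rw [hL θ v hv]
  refine (norm_add_le _ _).trans ?_
  rw [norm_smul, Real.norm_eq_abs]
  have hLw := hLb _ _ (hEuMem t θ v hv)
  nlinarith [mul_le_mul hLw (hXb (Φ.flow t θ)) (norm_nonneg _) ((abs_nonneg _).trans hLw)]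

theorem exists_exp_decay_of_graphTransformEq [CompactSpace B] (hXcont : Continuous X)
    (hPrcont : Continuous Pr) (hPrGraph : ∀ θ, ∀ v ∈ Eu θ, ∀ a : ℝ, Pr θ (v + a • X θ) = v)
    {D : ℝ} (hD : 0 ≤ D) {L : B → E →L[ℝ] ℝ} (hL : ∀ t, Φ.GraphTransformEq Pr X Eu t L L)
    (hLb : ∀ θ, ∀ w ∈ Eu θ, |L θ w| ≤ D * ‖w‖)
    (hEuMem : ∀ t θ, ∀ v ∈ Eu θ, Φ.transAction Pr t θ v ∈ Eu (Φ.flow t θ))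
    {C lam : ℝ} (hC : 0 < C) (hlam : 0 < lam)
    (hEuContr : ∀ θ, ∀ v ∈ Eu θ, ∀ t ≥ (0:ℝ),
      ‖Φ.transAction Pr (-t) θ v‖ ≤ C * Real.exp (-lam * t) * ‖v‖) :
    ∃ A > (0:ℝ), ∃ a > (0:ℝ), ∀ θ : B, ∀ v ∈ Eu θ, ∀ t ≥ (0:ℝ),
      ‖Φ.P (-t) θ (v + L θ v • X θ)‖ ≤ A * Real.exp (-a * t) * ‖v + L θ v • X θ‖ := by
  obtain ⟨Mx, hMx, hXb⟩ := exists_pos_bound_of_continuous hXcont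
  obtain ⟨Mp, hMp, hPrb⟩ := exists_pos_bound_of_continuous hPrcont
  refine ⟨(1 + D * Mx) * C * Mp, by positivity, lam, hlam, fun θ v hv t ht => ?_⟩
  have hv' : ‖v‖ ≤ Mp * ‖v + L θ v • X θ‖ := by
    conv_lhs => rw [← hPrGraph θ v hv (L θ v)]
    exact ((Pr θ).le_opNorm _).trans (mul_le_mul_of_nonneg_right (hPrb θ) (norm_nonneg _))
  calc ‖Φ.P (-t) θ (v + L θ v • X θ)‖
      ≤ (1 + D * Mx) * ‖Φ.transAction Pr (-t) θ v‖ :=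
        norm_P_apply_graph_le (hL (-t)) hLb hXb hEuMem hv
    _ ≤ (1 + D * Mx) * (C * Real.exp (-lam * t) * (Mp * ‖v + L θ v • X θ‖)) := by
        gcongr
        exact (hEuContr θ v hv t ht).trans (by gcongr)
    _ = _ := by ring

end LinearCocycle

theorem graph_transform_invariant_unstable_bundle_general
    [CompactSpace B]
    (Φ : LinearCocycle B E)
    (X : B → E) (hX : ∀ θ, X θ ≠ 0)
    (hXcont : Continuous X)
    (hXinv : ∀ t θ, Φ.P t θ (X θ) = X (Φ.flow t θ))
    (N : B → Submodule ℝ E)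
    (hsplit : ∀ θ, IsCompl (N θ) (Submodule.span ℝ {X θ}))
    (Pr : B → E →L[ℝ] E)
    (hPrcont : Continuous Pr)
    (hPr : ∀ θ, ∀ v ∈ N θ, ∀ a : ℝ, Pr θ (v + a • X θ) = v)
    (Eu : B → Submodule ℝ E)
    (hEuN : ∀ θ, Eu θ ≤ N θ)
    (hEuInv : ∀ t θ, (Eu θ).map (Φ.transAction Pr t θ : E →ₗ[ℝ] E)
      = Eu (Φ.flow t θ))
    (C lam : ℝ) (hC : 0 < C) (hlam : 0 < lam)
    (hEuContr : ∀ θ, ∀ v ∈ Eu θ, ∀ t ≥ (0:ℝ),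
      ‖Φ.transAction Pr (-t) θ v‖ ≤ C * Real.exp (-lam * t) * ‖v‖) :
    -- (i) the graph transform of a difference: T_t(L₁ - L₂) = (L₁-L₂)∘Ψ_t⁻¹
    (∀ t : ℝ, ∀ L₁ L₂ M₁ M₂ : B → E →L[ℝ] ℝ,
      Φ.GraphTransformEq Pr X Eu t L₁ M₁ →
      Φ.GraphTransformEq Pr X Eu t L₂ M₂ →
      ∀ θ : B, ∀ v ∈ Eu θ,
        M₁ (Φ.flow t θ) (Φ.transAction Pr t θ v) -
            M₂ (Φ.flow t θ) (Φ.transAction Pr t θ v) =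
          L₁ θ v - L₂ θ v) ∧
    -- (ii) contraction of the graph transform for large t
    (∃ t₀ > (0:ℝ), ∀ t ≥ t₀, ∃ c ∈ Set.Ico (0:ℝ) 1,
      ∀ L₁ L₂ M₁ M₂ : B → E →L[ℝ] ℝ,
        Φ.GraphTransformEq Pr X Eu t L₁ M₁ →
        Φ.GraphTransformEq Pr X Eu t L₂ M₂ →
        BddAbove (Set.range fun θ => ‖L₁ θ - L₂ θ‖) →
        ∀ θ' : B, ∀ w ∈ Eu θ', ‖w‖ ≤ 1 →
          |M₁ θ' w - M₂ θ' w| ≤ c * ⨆ θ, ‖L₁ θ - L₂ θ‖) ∧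
    -- (iii) a fixed point L* whose graph is dψ_t-invariant, with
    -- exponential backward decay on 𝓔^u = graph L*
    (∃ Lstar : B → E →L[ℝ] ℝ,
      (∀ t : ℝ, Φ.GraphTransformEq Pr X Eu t Lstar Lstar) ∧
      (∀ t : ℝ, ∀ θ : B,
        Φ.P t θ '' {ξ | ∃ v ∈ Eu θ, ξ = v + Lstar θ v • X θ} =
          {ξ | ∃ w ∈ Eu (Φ.flow t θ), ξ = w + Lstar (Φ.flow t θ) w • X (Φ.flow t θ)}) ∧
      (∃ A > (0:ℝ), ∃ a > (0:ℝ), ∀ θ : B, ∀ v ∈ Eu θ, ∀ t ≥ (0:ℝ),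
        ‖Φ.P (-t) θ (v + Lstar θ v • X θ)‖ ≤
          A * Real.exp (-a * t) * ‖v + Lstar θ v • X θ‖)) := by
  obtain ⟨κ, hκ, hκX, K, hK, hκb⟩ := exists_coord_of_isCompl hX hXcont hsplit hPrcont hPr
  have hPrX : ∀ θ, Pr θ (X θ) = 0 := fun θ => by
    simpa using hPr θ 0 (N θ).zero_mem 1
  have hPrGraph : ∀ θ, ∀ v ∈ Eu θ, ∀ a : ℝ, Pr θ (v + a • X θ) = v :=
    fun θ v hv => hPr θ v (hEuN θ hv)
  have hPrEu : ∀ θ, ∀ v ∈ Eu θ, Pr θ v = v := fun θ v hv => by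
    simpa using hPrGraph θ v hv 0
  have hEuMem : ∀ t θ, ∀ v ∈ Eu θ, Φ.transAction Pr t θ v ∈ Eu (Φ.flow t θ) :=
    fun t θ v hv => hEuInv t θ ▸ Submodule.mem_map_of_mem hv
  obtain ⟨L, D, hD, hL, hLb⟩ :=
    LinearCocycle.exists_graphTransformEq_self hX hXinv hκ hκX hK hκb hC.le hlam hEuContr hEuMem
  refine ⟨fun t L₁ L₂ M₁ M₂ h₁ h₂ θ v hv => h₁.sub_apply_transAction hX hκ hXinv h₂ hv,
    LinearCocycle.graphTransform_contracting hX hκ hXinv hPrX hPrEu hEuMem hC hlam hEuContr,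
    L, hL, fun t θ => LinearCocycle.image_graph_eq_of_graphTransformEq (hL t) (hEuInv t θ),
    LinearCocycle.exists_exp_decay_of_graphTransformEq hXcont hPrcont hPrGraph hD hL hLb
      hEuMem hC hlam hEuContr⟩

/-- The graph transform associated with a hyperbolic splitting of the
transversal action: difference identity, contraction for large times, and the
invariant graph `𝓔^u = graph L*` with exponential backward decay. -/
theorem graph_transform_invariant_unstable_bundle
    [CompactSpace B] [FiniteDimensional ℝ E]
    (Φ : LinearCocycle B E)
    (X : B → E) (hX : ∀ θ, X θ ≠ 0)
    (hXcont : Continuous X)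
    (hXinv : ∀ t θ, Φ.P t θ (X θ) = X (Φ.flow t θ))
    (N : B → Submodule ℝ E)
    (hsplit : ∀ θ, IsCompl (N θ) (Submodule.span ℝ {X θ}))
    (Pr : B → E →L[ℝ] E)
    (hPrcont : Continuous Pr)
    (hPr : ∀ θ, ∀ v ∈ N θ, ∀ a : ℝ, Pr θ (v + a • X θ) = v)
    (Es Eu : B → Submodule ℝ E)
    (hEsN : ∀ θ, Es θ ≤ N θ) (hEuN : ∀ θ, Eu θ ≤ N θ)
    (hEsInv : ∀ t θ, (Es θ).map (Φ.transAction Pr t θ : E →ₗ[ℝ] E)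
      = Es (Φ.flow t θ))
    (hEuInv : ∀ t θ, (Eu θ).map (Φ.transAction Pr t θ : E →ₗ[ℝ] E)
      = Eu (Φ.flow t θ))
    (hCompl : ∀ θ, Es θ ⊔ Eu θ = N θ ∧ Es θ ⊓ Eu θ = ⊥)
    (C lam : ℝ) (hC : 0 < C) (hlam : 0 < lam)
    (hEsContr : ∀ θ, ∀ v ∈ Es θ, ∀ t ≥ (0:ℝ),
      ‖Φ.transAction Pr t θ v‖ ≤ C * Real.exp (-lam * t) * ‖v‖)
    (hEuContr : ∀ θ, ∀ v ∈ Eu θ, ∀ t ≥ (0:ℝ),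
      ‖Φ.transAction Pr (-t) θ v‖ ≤ C * Real.exp (-lam * t) * ‖v‖) :
    -- (i) the graph transform of a difference: T_t(L₁ - L₂) = (L₁-L₂)∘Ψ_t⁻¹
    (∀ t : ℝ, ∀ L₁ L₂ M₁ M₂ : B → E →L[ℝ] ℝ,
      Φ.GraphTransformEq Pr X Eu t L₁ M₁ →
      Φ.GraphTransformEq Pr X Eu t L₂ M₂ →
      ∀ θ : B, ∀ v ∈ Eu θ,
        M₁ (Φ.flow t θ) (Φ.transAction Pr t θ v) -
            M₂ (Φ.flow t θ) (Φ.transAction Pr t θ v) =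
          L₁ θ v - L₂ θ v) ∧
    -- (ii) contraction of the graph transform for large t
    (∃ t₀ > (0:ℝ), ∀ t ≥ t₀, ∃ c ∈ Set.Ico (0:ℝ) 1,
      ∀ L₁ L₂ M₁ M₂ : B → E →L[ℝ] ℝ,
        Φ.GraphTransformEq Pr X Eu t L₁ M₁ →
        Φ.GraphTransformEq Pr X Eu t L₂ M₂ →
        BddAbove (Set.range fun θ => ‖L₁ θ - L₂ θ‖) →
        ∀ θ' : B, ∀ w ∈ Eu θ', ‖w‖ ≤ 1 →
          |M₁ θ' w - M₂ θ' w| ≤ c * ⨆ θ, ‖L₁ θ - L₂ θ‖) ∧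
    -- (iii) a fixed point L* whose graph is dψ_t-invariant, with
    -- exponential backward decay on 𝓔^u = graph L*
    (∃ Lstar : B → E →L[ℝ] ℝ,
      (∀ t : ℝ, Φ.GraphTransformEq Pr X Eu t Lstar Lstar) ∧
      (∀ t : ℝ, ∀ θ : B,
        Φ.P t θ '' {ξ | ∃ v ∈ Eu θ, ξ = v + Lstar θ v • X θ} =
          {ξ | ∃ w ∈ Eu (Φ.flow t θ), ξ = w + Lstar (Φ.flow t θ) w • X (Φ.flow t θ)}) ∧
      (∃ A > (0:ℝ), ∃ a > (0:ℝ), ∀ θ : B, ∀ v ∈ Eu θ, ∀ t ≥ (0:ℝ),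
        ‖Φ.P (-t) θ (v + Lstar θ v • X θ)‖ ≤
          A * Real.exp (-a * t) * ‖v + Lstar θ v • X θ‖)) :=
  graph_transform_invariant_unstable_bundle_general Φ X hX hXcont hXinv N hsplit Pr hPrcont hPr Eu
    hEuN hEuInv C lam hC hlam hEuContr
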